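/- arXiv:2207.12206 — 2 statements merged into one kernel-verified Lean document; each statement's English description precedes it below -/
import Mathlib

section
/- Let Y₁, …, Yₙ be real-valued random variables on a probability space (Ω, P), and let u₁, …, uₙ ∈ ℝ and q₁, …, qₙ ∈ ℝ satisfy P(Yᵢ ≤ qᵢ) ≥ uᵢ for every i. Set w = (∑_{i=1}^n uᵢ) + 1 − n and assume w > 0. Let Z = ∑_{i=1}^n Yᵢ and define the w-quantile of Z as Q_Z^w = inf{ z ∈ ℝ : P(Z ≤ z) ≥ w }. Then Q_Z^w ≤ ∑_{i=1}^n qᵢ. -/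
/-!
By the Fréchet–Hoeffding (Bonferroni) bound, all the events `Yᵢ ≤ qᵢ` occur together with
probability at least `∑ uᵢ - (n - 1) = w`, and on that event `Z ≤ ∑ qᵢ`. Hence `∑ qᵢ` belongs to
the set whose infimum is the `w`-quantile; that set is bounded below because the distribution
function of `Z` tends to `0 < w` at `-∞`.
-/

open MeasureTheory ProbabilityTheory Filter

section

variable {Ω ι : Type*} [MeasurableSpace Ω]

theorem sum_probReal_sub_card_le_probReal_iInter {P : Measure Ω} [IsProbabilityMeasure P]
    [Fintype ι] {A : ι → Set Ω} (hA : ∀ i, MeasurableSet (A i)) :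
    ∑ i, P.real (A i) - (Fintype.card ι - 1) ≤ P.real (⋂ i, A i) := by
  have hunion : P.real (⋂ i, A i)ᶜ ≤ ∑ i, (1 - P.real (A i)) := by
    rw [Set.compl_iInter]
    refine (measureReal_iUnion_fintype_le _).trans_eq (Finset.sum_congr rfl fun i _ => ?_)
    exact probReal_compl_eq_one_sub (hA i)
  rw [probReal_compl_eq_one_sub (MeasurableSet.iInter hA), Finset.sum_sub_distrib] at hunion
  simp only [Finset.sum_const, Finset.card_univ, nsmul_eq_mul, mul_one] at hunion
  linarith

theorem bddBelow_setOf_le_cdf (μ : Measure ℝ) {w : ℝ} (hw : 0 < w) :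
    BddBelow {z | w ≤ cdf μ z} := by
  obtain ⟨a, ha⟩ := eventually_atBot.1 ((tendsto_cdf_atBot μ).eventually_lt_const hw)
  exact ⟨a, fun z hz => le_of_not_gt fun hza => (ha z hza.le).not_ge hz⟩

noncomputable def quantile (P : Measure Ω) (Z : Ω → ℝ) (w : ℝ) : ℝ :=
  sInf {z | w ≤ P.real {ω | Z ω ≤ z}}

theorem quantile_le_of_le_probReal {P : Measure Ω} [IsProbabilityMeasure P] {Z : Ω → ℝ}
    (hZ : Measurable Z) {w x : ℝ} (hw : 0 < w) (hx : w ≤ P.real {ω | Z ω ≤ x}) :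
    quantile P Z w ≤ x := by
  have := Measure.isProbabilityMeasure_map (μ := P) hZ.aemeasurable
  have hcdf : ∀ z, P.real {ω | Z ω ≤ z} = cdf (P.map Z) z := fun z => by
    rw [cdf_eq_real, map_measureReal_apply hZ measurableSet_Iic]; rfl
  simp only [quantile, hcdf] at hx ⊢
  exact csInf_le (bddBelow_setOf_le_cdf _ hw) hx

end

/-- Upper bound on the `w`-quantile of a sum of random variables in terms of
the sum of (upper bounds on) quantiles of the summands, where
`w = ∑ i, u i + 1 − n`. -/
theorem quantile_sum_le_sum_quantiles
    {Ω : Type*} [MeasurableSpace Ω] (P : Measure Ω) [IsProbabilityMeasure P]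
    (n : ℕ) (Y : Fin n → Ω → ℝ) (hY : ∀ i, Measurable (Y i))
    (u : Fin n → ℝ) (q : Fin n → ℝ)
    (hq : ∀ i, u i ≤ (P {ω | Y i ω ≤ q i}).toReal)
    (w : ℝ) (hw : w = (∑ i, u i) + 1 - n) (hw0 : 0 < w)
    (Z : Ω → ℝ) (hZ : Z = fun ω => ∑ i, Y i ω) :
    sInf {z : ℝ | w ≤ (P {ω | Z ω ≤ z}).toReal} ≤ ∑ i, q i := by
  subst hZ
  have hall_le : ⋂ i, {ω | Y i ω ≤ q i} ⊆ {ω | ∑ i, Y i ω ≤ ∑ i, q i} := fun ω hω =>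
    show ∑ i, Y i ω ≤ ∑ i, q i from
      Finset.sum_le_sum fun i _ => Set.mem_iInter.1 hω i
  have hbonferroni := sum_probReal_sub_card_le_probReal_iInter (P := P)
    fun i => measurableSet_le (hY i) (measurable_const (a := q i))
  have hu : ∑ i, u i ≤ ∑ i, P.real {ω | Y i ω ≤ q i} := Finset.sum_le_sum fun i _ => hq i
  refine quantile_le_of_le_probReal (Finset.measurable_sum _ fun i _ => hY i) hw0 ?_
  calc w ≤ P.real (⋂ i, {ω | Y i ω ≤ q i}) := by
        rw [Fintype.card_fin] at hbonferroni; linarith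
    _ ≤ P.real {ω | ∑ i, Y i ω ≤ ∑ i, q i} := measureReal_mono hall_le
end

section
/- Let Y₁, …, Yₙ be real-valued random variables on a probability space (Ω, P), each in L²(P), and let u₁, …, uₙ ∈ ℝ and q₁, …, qₙ ∈ ℝ satisfy P(Yᵢ ≤ qᵢ) ≥ uᵢ for every i. Set w = (∑_{i=1}^n uᵢ) + 1 − n and assume 0 < w < 1. Let Z = ∑_{i=1}^n Yᵢ, μ_Z = E[Z] = ∑_{i=1}^n E[Yᵢ], and σ_Z = √Var(Z). Then (μ_Z − ∑_{i=1}^n qᵢ)·√(w/(1 − w)) ≤ σ_Z. -/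
/-!
By the Bonferroni inequality the event `{∀ i, Yᵢ ≤ qᵢ}` has probability at least `w`, and it is
contained in `{Z ≤ ∑ qᵢ}`. Cantelli's one-sided Chebyshev inequality bounds the probability of
`{Z ≤ μ_Z - t}` by `σ_Z² / (σ_Z² + t²)`; applied with `t = μ_Z - ∑ qᵢ` it gives
`w t² ≤ (1 - w) σ_Z²`, which is the claim after taking square roots.
-/

open MeasureTheory ProbabilityTheory

namespace ProbabilityTheory

variable {Ω : Type*} [MeasurableSpace Ω] {P : Measure Ω} [IsProbabilityMeasure P]

theorem sum_measureReal_add_one_sub_card_le_measureReal_iInter {ι : Type*} [Fintype ι]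
    {A : ι → Set Ω} (hA : ∀ i, NullMeasurableSet (A i) P) :
    ∑ i, P.real (A i) + 1 - Fintype.card ι ≤ P.real (⋂ i, A i) := by
  have hU := measureReal_iUnion_fintype_le (μ := P) fun i => (A i)ᶜ
  rw [← Set.compl_iInter, probReal_compl_eq_one_sub₀ (.iInter hA)] at hU
  simp only [probReal_compl_eq_one_sub₀ (hA _), Finset.sum_sub_distrib, Finset.sum_const,
    Finset.card_univ, nsmul_eq_mul, mul_one] at hU
  linarith

theorem integral_sub_const_sq {X : Ω → ℝ} (hX : MemLp X 2 P) (c : ℝ) :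
    ∫ ω, (X ω - c) ^ 2 ∂P = variance X P + (P[X] - c) ^ 2 := by
  have h := variance_eq_sub (hX.sub (memLp_const c))
  rw [show X - (fun _ => c) = fun ω => X ω - c from rfl, variance_sub_const hX.1,
    integral_sub (hX.integrable one_le_two) (integrable_const c)] at h
  simp only [Pi.pow_apply, integral_const, probReal_univ, smul_eq_mul, one_mul] at h
  linarith

theorem add_sq_mul_measureReal_le_variance_add_sq {X : Ω → ℝ} (hX : MemLp X 2 P) {t a : ℝ}
    (hta : 0 ≤ t + a) :
    (t + a) ^ 2 * P.real {ω | X ω ≤ P[X] - t} ≤ variance X P + a ^ 2 := by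
  have hint : Integrable (fun ω => (X ω - (P[X] + a)) ^ 2) P :=
    (hX.sub (memLp_const _)).integrable_sq
  have hmarkov := mul_meas_ge_le_integral_of_nonneg (ae_of_all P fun ω => sq_nonneg _) hint
    ((t + a) ^ 2)
  rw [integral_sub_const_sq hX, sub_add_cancel_left, neg_sq] at hmarkov
  refine le_trans (mul_le_mul_of_nonneg_left (measureReal_mono fun ω (hω : X ω ≤ P[X] - t) => ?_)
    (sq_nonneg _)) hmarkov
  show (t + a) ^ 2 ≤ (X ω - (P[X] + a)) ^ 2
  nlinarith

/-- **Cantelli's inequality**, the one-sided Chebyshev inequality. -/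
theorem measureReal_le_integral_sub_le_variance_div {X : Ω → ℝ} (hX : MemLp X 2 P) {t : ℝ}
    (ht : 0 < t) :
    P.real {ω | X ω ≤ P[X] - t} ≤ variance X P / (variance X P + t ^ 2) := by
  have hv : 0 ≤ variance X P := variance_nonneg X P
  -- `a = Var X / t` minimises `(Var X + a²) / (t + a)²`.
  have h := add_sq_mul_measureReal_le_variance_add_sq hX (a := variance X P / t) (by positivity)
  rw [le_div_iff₀ (by positivity)]
  field_simp at h
  nlinarith

theorem integral_sub_mul_sqrt_le_sqrt_variance {X : Ω → ℝ} (hX : MemLp X 2 P) {q w : ℝ}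
    (hw : w ≤ P.real {ω | X ω ≤ q}) :
    (P[X] - q) * Real.sqrt (w / (1 - w)) ≤ Real.sqrt (variance X P) := by
  set t := P[X] - q
  set v := variance X P
  have hv : 0 ≤ v := variance_nonneg X P
  rcases le_or_gt t 0 with ht | ht
  · exact (mul_nonpos_of_nonpos_of_nonneg ht (Real.sqrt_nonneg _)).trans (Real.sqrt_nonneg _)
  have hcantelli := measureReal_le_integral_sub_le_variance_div hX ht
  rw [sub_sub_cancel] at hcantelli
  have hwt : w * (v + t ^ 2) ≤ v := (le_div_iff₀ (by positivity)).1 (hw.trans hcantelli)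
  have hkey : t ^ 2 * (w / (1 - w)) ≤ v := by
    rcases lt_or_ge w 1 with hw1 | hw1
    · rw [mul_div_assoc', div_le_iff₀ (by linarith)]
      linarith
    · have : w / (1 - w) ≤ 0 := div_nonpos_of_nonneg_of_nonpos (by linarith) (by linarith)
      nlinarith
  calc t * Real.sqrt (w / (1 - w)) = Real.sqrt (t ^ 2 * (w / (1 - w))) := by
        rw [Real.sqrt_mul (sq_nonneg t), Real.sqrt_sq ht.le]
    _ ≤ Real.sqrt v := Real.sqrt_le_sqrt hkey

end ProbabilityTheory

theorem std_sum_lower_bound_from_summand_quantiles_general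
    {Ω : Type*} [MeasurableSpace Ω] (P : Measure Ω) [IsProbabilityMeasure P]
    (n : ℕ) (Y : Fin n → Ω → ℝ)
    (hY : ∀ i, MemLp (Y i) 2 P)
    (u : Fin n → ℝ) (q : Fin n → ℝ)
    (hq : ∀ i, u i ≤ (P {ω | Y i ω ≤ q i}).toReal)
    (w : ℝ) (hw : w = (∑ i, u i) + 1 - n)
    (Z : Ω → ℝ) (hZ : Z = fun ω => ∑ i, Y i ω)
    (μZ σZ : ℝ) (hμZ : μZ = ∫ ω, Z ω ∂P) (hσZ : σZ = Real.sqrt (variance Z P)) :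
    (μZ - ∑ i, q i) * Real.sqrt (w / (1 - w)) ≤ σZ := by
  have hZ2 : MemLp Z 2 P := hZ ▸ memLp_finsetSum _ fun i _ => hY i
  have hZq : w ≤ P.real {ω | Z ω ≤ ∑ i, q i} :=
    calc w ≤ ∑ i, P.real {ω | Y i ω ≤ q i} + 1 - Fintype.card (Fin n) := by
          rw [hw, Fintype.card_fin]
          gcongr with i
          exact hq i
      _ ≤ P.real (⋂ i, {ω | Y i ω ≤ q i}) :=
          sum_measureReal_add_one_sub_card_le_measureReal_iInter fun i =>
            nullMeasurableSet_le (hY i).1.aemeasurable aemeasurable_const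
      _ ≤ P.real {ω | Z ω ≤ ∑ i, q i} := measureReal_mono fun ω hω => by
          simp only [hZ, Set.mem_ofPred_eq]
          exact Finset.sum_le_sum fun i _ => Set.mem_iInter.1 hω i
  subst hμZ hσZ
  exact integral_sub_mul_sqrt_le_sqrt_variance hZ2 hZq

/-- Equation (7) of the paper: lower bound on the standard deviation of a sum
of random variables in terms of the sum of (upper bounds on) quantiles of the
summands, with `w = ∑ i, u i + 1 − n`. -/
theorem std_sum_lower_bound_from_summand_quantiles
    {Ω : Type*} [MeasurableSpace Ω] (P : Measure Ω) [IsProbabilityMeasure P]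
    (n : ℕ) (Y : Fin n → Ω → ℝ)
    (hYm : ∀ i, Measurable (Y i)) (hY : ∀ i, MemLp (Y i) 2 P)
    (u : Fin n → ℝ) (q : Fin n → ℝ)
    (hq : ∀ i, u i ≤ (P {ω | Y i ω ≤ q i}).toReal)
    (w : ℝ) (hw : w = (∑ i, u i) + 1 - n) (hw0 : 0 < w) (hw1 : w < 1)
    (Z : Ω → ℝ) (hZ : Z = fun ω => ∑ i, Y i ω)
    (μZ σZ : ℝ) (hμZ : μZ = ∫ ω, Z ω ∂P) (hσZ : σZ = Real.sqrt (variance Z P)) :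
    (μZ - ∑ i, q i) * Real.sqrt (w / (1 - w)) ≤ σZ :=
  std_sum_lower_bound_from_summand_quantiles_general P n Y hY u q hq w hw Z hZ μZ σZ hμZ hσZ
end
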